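/- Let W=(W_1,…,W_n) be i.i.d. Bernoulli(π), π∈(0,1), with y_i:{0,1}^n→ℝ. There exists a constant C>0 depending only on π such that the difference between the exposure-based marginal policy effect and the oracle marginal policy effect satisfies |τ_MPE − τ_MPE^oracle| ≤ C·( ∑_{i=1}^n E[ Var( y_i(W) | d_i(W) ) ] )^{1/2}, where d_i:{0,1}^n→D_i are arbitrary (measurable) exposure mappings and τ_MPE is defined by replacing y_i with the conditional expectation ỹ_i(w)=E[y_i(W)|d_i(W)=d_i(w)] in the marginal policy effect functional. -/
import Mathlib


open Finset

/-- The value of a Bernoulli variable: `1` if true, `0` if false. -/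
def ind (b : Bool) : ℝ := if b then 1 else 0

/-- Product Bernoulli(π) pmf on `{0,1}^n`. -/
noncomputable def pw (n : ℕ) (π : ℝ) (w : Fin n → Bool) : ℝ :=
  ∏ i, if w i then π else 1 - π

/-- Expectation under `W ~ Bern(π)^n`. -/
noncomputable def Exp (n : ℕ) (π : ℝ) (f : (Fin n → Bool) → ℝ) : ℝ :=
  ∑ w : Fin n → Bool, pw n π w * f w

/-- Marginal policy effect functional of a family of outcome models. -/
noncomputable def tauMPE (n : ℕ) (π : ℝ) (f : Fin n → (Fin n → Bool) → ℝ) : ℝ :=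
  (1 / (n * π * (1 - π))) *
    Exp n π (fun w => (∑ j, f j w) * (∑ i, (ind (w i) - π)))

/-- Pseudo-true outcome model: `ỹ(w) = E[y(W) | d(W) = d(w)]` under `W ~ Bern(π)^n`. -/
noncomputable def condExpD {n : ℕ} (π : ℝ) {D : Type} [DecidableEq D]
    (d : (Fin n → Bool) → D) (y : (Fin n → Bool) → ℝ) (w : Fin n → Bool) : ℝ :=
  (∑ w' ∈ univ.filter (fun w' => d w' = d w), pw n π w' * y w') /
    (∑ w' ∈ univ.filter (fun w' => d w' = d w), pw n π w')

lemma pw_nonneg {n : ℕ} {π : ℝ} (h0 : 0 ≤ π) (h1 : π ≤ 1) (w : Fin n → Bool) :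
    0 ≤ pw n π w := by
  unfold pw; apply Finset.prod_nonneg; intro i _; split <;> linarith

lemma Exp_sum {n : ℕ} {π : ℝ} {ι : Type*} (s : Finset ι) (h : ι → (Fin n → Bool) → ℝ) :
    Exp n π (fun w => ∑ i ∈ s, h i w) = ∑ i ∈ s, Exp n π (h i) := by
  unfold Exp; simp_rw [Finset.mul_sum]; rw [Finset.sum_comm]

lemma Exp_prod (n : ℕ) (π : ℝ) (g : Fin n → Bool → ℝ) :
    Exp n π (fun w => ∏ i, g i (w i)) = ∏ i, (π * g i true + (1 - π) * g i false) := by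
  unfold Exp pw
  simp_rw [← Finset.prod_mul_distrib]
  rw [← Fintype.prod_sum fun i b => (if b then π else 1 - π) * g i b]
  simp [Fintype.sum_bool]

lemma Exp_XX (n : ℕ) (π : ℝ) (i j : Fin n) :
    Exp n π (fun w => (ind (w i) - π) * (ind (w j) - π)) =
      if i = j then π * (1 - π) else 0 := by
  have hgw : ∀ w : Fin n → Bool,
      (ind (w i) - π) * (ind (w j) - π) =
      ∏ k, ((if k = i then ind (w k) - π else 1) * (if k = j then ind (w k) - π else 1)) := by
    intro w
    rw [Finset.prod_mul_distrib, Finset.prod_ite_eq' univ i (fun k => ind (w k) - π),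
      Finset.prod_ite_eq' univ j (fun k => ind (w k) - π)]
    simp
  simp_rw [hgw]
  rw [Exp_prod n π (fun k b => (if k = i then ind b - π else 1) * (if k = j then ind b - π else 1))]
  by_cases h : i = j
  · subst h
    simp only [if_pos rfl]
    rw [Finset.prod_eq_single i]
    · simp [ind]; ring
    · intro k _ hk; simp [hk, ind]
    · simp
  · rw [if_neg h]
    apply Finset.prod_eq_zero (Finset.mem_univ i)
    simp [h, ind]
    ring

lemma Exp_G2 (n : ℕ) (π : ℝ) :
    Exp n π (fun w => (∑ i, (ind (w i) - π)) ^ 2) = n * (π * (1 - π)) := by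
  have : ∀ w : Fin n → Bool, (∑ i, (ind (w i) - π)) ^ 2
      = ∑ i, ∑ j, (ind (w i) - π) * (ind (w j) - π) := by
    intro w; rw [sq, Finset.sum_mul_sum]
  simp_rw [this]
  rw [Exp_sum]
  simp_rw [Exp_sum]
  simp_rw [Exp_XX]
  simp [Finset.sum_ite_eq]

lemma Exp_nonneg {n : ℕ} {π : ℝ} (h0 : 0 ≤ π) (h1 : π ≤ 1) {f : (Fin n → Bool) → ℝ}
    (hf : ∀ w, 0 ≤ f w) : 0 ≤ Exp n π f :=
  Finset.sum_nonneg fun w _ => mul_nonneg (pw_nonneg h0 h1 w) (hf w)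

lemma Exp_mono {n : ℕ} {π : ℝ} (h0 : 0 ≤ π) (h1 : π ≤ 1) {f g : (Fin n → Bool) → ℝ}
    (hfg : ∀ w, f w ≤ g w) : Exp n π f ≤ Exp n π g :=
  Finset.sum_le_sum fun w _ => mul_le_mul_of_nonneg_left (hfg w) (pw_nonneg h0 h1 w)

lemma Exp_CS {n : ℕ} {π : ℝ} (h0 : 0 ≤ π) (h1 : π ≤ 1) (f g : (Fin n → Bool) → ℝ) :
    (Exp n π (fun w => f w * g w)) ^ 2 ≤
      Exp n π (fun w => f w ^ 2) * Exp n π (fun w => g w ^ 2) := by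
  have h := Finset.sum_mul_sq_le_sq_mul_sq Finset.univ
    (fun w => Real.sqrt (pw n π w) * f w) (fun w => Real.sqrt (pw n π w) * g w)
  have hpw : ∀ w : Fin n → Bool, Real.sqrt (pw n π w) * Real.sqrt (pw n π w) = pw n π w :=
    fun w => Real.mul_self_sqrt (pw_nonneg h0 h1 w)
  unfold Exp
  calc (∑ w : Fin n → Bool, pw n π w * (f w * g w)) ^ 2
      = (∑ w : Fin n → Bool, (Real.sqrt (pw n π w) * f w) * (Real.sqrt (pw n π w) * g w)) ^ 2 := by
        congr 1; apply Finset.sum_congr rfl; intro w _; symm; rw [mul_mul_mul_comm, hpw w]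
    _ ≤ (∑ w : Fin n → Bool, (Real.sqrt (pw n π w) * f w) ^ 2) *
        (∑ w : Fin n → Bool, (Real.sqrt (pw n π w) * g w) ^ 2) := h
    _ = (∑ w : Fin n → Bool, pw n π w * f w ^ 2) * (∑ w : Fin n → Bool, pw n π w * g w ^ 2) := by
        congr 1 <;> (apply Finset.sum_congr rfl; intro w _; rw [mul_pow, sq, hpw w])

lemma Exp_const_mul {n : ℕ} {π : ℝ} (c : ℝ) (g : (Fin n → Bool) → ℝ) :
    Exp n π (fun w => c * g w) = c * Exp n π g := by
  unfold Exp; rw [Finset.mul_sum]; exact Finset.sum_congr rfl fun w _ => by ring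

/-- There is a constant `C > 0` depending only on `π` such that the pseudo-true MPE is within
`C · (∑_i E[Var(y_i(W) | d_i(W))])^{1/2}` of the oracle MPE, for any exposure mappings `d_i`.
(In this finite setting `E[Var(y_i(W)|d_i(W))] = E[(y_i(W) - ỹ_i(W))^2]`.) -/
theorem stmt7 (π : ℝ) (hπ : 0 < π) (hπ' : π < 1) :
    ∃ C > 0, ∀ (n : ℕ), 1 ≤ n →
      ∀ (D : Fin n → Type) (_ : ∀ i, DecidableEq (D i))
        (d : ∀ i, (Fin n → Bool) → D i) (y : Fin n → (Fin n → Bool) → ℝ),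
        |tauMPE n π (fun i => condExpD π (d i) (y i)) - tauMPE n π y| ≤
          C * Real.sqrt
            (∑ i, Exp n π (fun w => (y i w - condExpD π (d i) (y i) w) ^ 2)) := by

  have h1' : (0:ℝ) < 1 - π := by linarith
  have hq : 0 < π * (1 - π) := mul_pos hπ h1'
  have hsq : 0 < Real.sqrt (π * (1 - π)) := Real.sqrt_pos.2 hq
  refine ⟨(Real.sqrt (π * (1 - π)))⁻¹, inv_pos.2 hsq, ?_⟩
  intro n hn D _ d y
  have hn0 : (0:ℝ) < n := by exact_mod_cast hn
  set f : Fin n → (Fin n → Bool) → ℝ := fun i => condExpD π (d i) (y i) with hf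
  set S : ℝ := ∑ i, Exp n π (fun w => (y i w - f i w) ^ 2) with hS
  have hS0 : 0 ≤ S :=
    Finset.sum_nonneg fun i _ => Exp_nonneg hπ.le hπ'.le (fun w => sq_nonneg _)
  set F : (Fin n → Bool) → ℝ := fun w => ∑ j, (f j w - y j w) with hF
  set G : (Fin n → Bool) → ℝ := fun w => ∑ i, (ind (w i) - π) with hG
  have hdiff : tauMPE n π f - tauMPE n π y
      = (1 / (n * π * (1 - π))) * Exp n π (fun w => F w * G w) := by
    unfold tauMPE
    rw [← mul_sub]
    congr 1
    unfold Exp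
    rw [← Finset.sum_sub_distrib]
    apply Finset.sum_congr rfl; intro w _
    rw [← mul_sub, ← sub_mul, ← Finset.sum_sub_distrib]
  have hG2 : Exp n π (fun w => G w ^ 2) = n * (π * (1 - π)) := Exp_G2 n π
  have hF2 : Exp n π (fun w => F w ^ 2) ≤ n * S := by
    have hpt : ∀ w, F w ^ 2 ≤ (n:ℝ) * ∑ j, (y j w - f j w) ^ 2 := by
      intro w
      have := sq_sum_le_card_mul_sum_sq (s := (univ : Finset (Fin n)))
        (f := fun j => f j w - y j w)
      have hsymm : ∀ j : Fin n, (f j w - y j w) ^ 2 = (y j w - f j w) ^ 2 := fun j => by ring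
      simp only [Finset.card_univ, Fintype.card_fin] at this
      calc F w ^ 2 ≤ (n:ℝ) * ∑ j, (f j w - y j w) ^ 2 := this
        _ = (n:ℝ) * ∑ j, (y j w - f j w) ^ 2 := by simp_rw [hsymm]
    calc Exp n π (fun w => F w ^ 2)
        ≤ Exp n π (fun w => (n:ℝ) * ∑ j, (y j w - f j w) ^ 2) := Exp_mono hπ.le hπ'.le hpt
      _ = (n:ℝ) * S := by rw [Exp_const_mul, Exp_sum]
  have habs : |Exp n π (fun w => F w * G w)| ≤
      (n:ℝ) * (Real.sqrt S * Real.sqrt (π * (1 - π))) := by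
    rw [← Real.sqrt_sq_eq_abs]
    have h2 : Exp n π (fun w => F w * G w) ^ 2 ≤ ((n:ℝ) * S) * ((n:ℝ) * (π * (1 - π))) := by
      calc Exp n π (fun w => F w * G w) ^ 2
          ≤ Exp n π (fun w => F w ^ 2) * Exp n π (fun w => G w ^ 2) :=
            Exp_CS hπ.le hπ'.le F G
        _ ≤ ((n:ℝ) * S) * ((n:ℝ) * (π * (1 - π))) := by
            rw [hG2]
            exact mul_le_mul_of_nonneg_right hF2 (by positivity)
    calc Real.sqrt (Exp n π (fun w => F w * G w) ^ 2)
        ≤ Real.sqrt (((n:ℝ) * S) * ((n:ℝ) * (π * (1 - π)))) := Real.sqrt_le_sqrt h2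
      _ = (n:ℝ) * (Real.sqrt S * Real.sqrt (π * (1 - π))) := by
          rw [show ((n:ℝ) * S) * ((n:ℝ) * (π * (1 - π))) = (n:ℝ) ^ 2 * (S * (π * (1 - π))) by ring,
            Real.sqrt_mul (sq_nonneg _), Real.sqrt_sq hn0.le, Real.sqrt_mul hS0]
  have hpos : (0:ℝ) < 1 / (n * π * (1 - π)) := by positivity
  have hqq : Real.sqrt (π * (1 - π)) * Real.sqrt (π * (1 - π)) = π * (1 - π) :=
    Real.mul_self_sqrt hq.le
  have key : (1 / ((n:ℝ) * π * (1 - π))) * ((n:ℝ) * (Real.sqrt S * Real.sqrt (π * (1 - π))))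
      = (Real.sqrt (π * (1 - π)))⁻¹ * Real.sqrt S := by
    set s := Real.sqrt (π * (1 - π)) with hs
    rw [mul_assoc (n:ℝ) π (1 - π), ← hqq]
    field_simp
  calc |tauMPE n π f - tauMPE n π y|
      = (1 / ((n:ℝ) * π * (1 - π))) * |Exp n π (fun w => F w * G w)| := by
        rw [hdiff, abs_mul, abs_of_pos hpos]
    _ ≤ (1 / ((n:ℝ) * π * (1 - π))) * ((n:ℝ) * (Real.sqrt S * Real.sqrt (π * (1 - π)))) :=
        mul_le_mul_of_nonneg_left habs hpos.le
    _ = (Real.sqrt (π * (1 - π)))⁻¹ * Real.sqrt S := key
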